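/- Let G1 := x0^9 − x1^9 + x2^8·x3 + x3^8·x2 and G2 := x0^21 + x1^21 + x2^21 − x3^21 in ℂ[x0, x1, x2, x3]. For every nonzero vector (a0, a1, a2, a3) ∈ ℂ⁴ with G1(a0, a1, a2, a3) = 0 and G2(a0, a1, a2, a3) = 0, the two gradient vectors (∂G1/∂x0, ∂G1/∂x1, ∂G1/∂x2, ∂G1/∂x3) and (∂G2/∂x0, ∂G2/∂x1, ∂G2/∂x2, ∂G2/∂x3), evaluated at (a0, a1, a2, a3), are linearly independent over ℂ. (That is, the smooth surfaces {G1 = 0} and {G2 = 0} intersect transversally in ℙ³_ℂ.) -/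
import Mathlib

open MvPolynomial

/-- The homogeneous degree-9 polynomial `G1 = x0⁹ − x1⁹ + x2⁸x3 + x3⁸x2`. -/
noncomputable def G1 : MvPolynomial (Fin 4) ℂ :=
  X 0 ^ 9 - X 1 ^ 9 + X 2 ^ 8 * X 3 + X 3 ^ 8 * X 2

/-- The homogeneous degree-21 polynomial `G2 = x0²¹ + x1²¹ + x2²¹ − x3²¹`. -/
noncomputable def G2 : MvPolynomial (Fin 4) ℂ :=
  X 0 ^ 21 + X 1 ^ 21 + X 2 ^ 21 - X 3 ^ 21

private lemma pow_zero_of (n : ℕ) (hn : n ≠ 0) {x : ℂ} (h : x ^ n = 0) : x = 0 :=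
  (pow_eq_zero_iff hn).mp h

private lemma key (a0 a1 a2 a3 s t : ℂ)
    (h1 : a0^9 - a1^9 + a2^8*a3 + a3^8*a2 = 0)
    (h2 : a0^21 + a1^21 + a2^21 - a3^21 = 0)
    (e0 : s * (9*a0^8) + t * (21*a0^20) = 0)
    (e1 : s * (-(9*a1^8)) + t * (21*a1^20) = 0)
    (e2 : s * (8*a2^7*a3 + a3^8) + t * (21*a2^20) = 0)
    (e3 : s * (8*a3^7*a2 + a2^8) + t * (-(21*a3^20)) = 0)
    (hnz : ¬(a0 = 0 ∧ a1 = 0 ∧ a2 = 0 ∧ a3 = 0)) :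
    s = 0 ∧ t = 0 := by
  by_cases ht : t = 0
  · refine ⟨?_, ht⟩
    subst ht
    by_contra hs
    apply hnz
    have z0 : a0 = 0 := by
      have h := (mul_eq_zero.mp (show s*(9*a0^8) = 0 by linear_combination e0)).resolve_left hs
      exact pow_zero_of 8 (by norm_num) (by linear_combination h/9)
    have z1 : a1 = 0 := by
      have h := (mul_eq_zero.mp (show s*(-(9*a1^8)) = 0 by linear_combination e1)).resolve_left hs
      exact pow_zero_of 8 (by norm_num) (by linear_combination -h/9)
    have f2 : 8*a2^7*a3 + a3^8 = 0 :=
      (mul_eq_zero.mp (show s*(8*a2^7*a3 + a3^8) = 0 by linear_combination e2)).resolve_left hs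
    have f3 : 8*a3^7*a2 + a2^8 = 0 :=
      (mul_eq_zero.mp (show s*(8*a3^7*a2 + a2^8) = 0 by linear_combination e3)).resolve_left hs
    rcases mul_eq_zero.mp (show a3 * (8*a2^7 + a3^7) = 0 by linear_combination f2) with h3 | h37
    · subst h3
      have z2 : a2 = 0 := pow_zero_of 8 (by norm_num) (by linear_combination f3)
      exact ⟨z0, z1, z2, rfl⟩
    · rcases mul_eq_zero.mp (show a2 * (8*a3^7 + a2^7) = 0 by linear_combination f3) with h2' | h27
      · subst h2'
        have z3 : a3 = 0 := pow_zero_of 7 (by norm_num) (by linear_combination h37)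
        exact ⟨z0, z1, rfl, z3⟩
      · have z2 : a2 = 0 := pow_zero_of 7 (by norm_num)
          (by linear_combination (8*h37 - h27)/63)
        subst z2
        have z3 : a3 = 0 := pow_zero_of 7 (by norm_num) (by linear_combination h37)
        exact ⟨z0, z1, rfl, z3⟩
  · exfalso
    have hs : s ≠ 0 := by
      intro hs0
      apply hnz
      subst hs0
      refine ⟨?_, ?_, ?_, ?_⟩
      · have h := (mul_eq_zero.mp (show t*(21*a0^20) = 0 by linear_combination e0)).resolve_left ht
        exact pow_zero_of 20 (by norm_num) (by linear_combination h/21)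
      · have h := (mul_eq_zero.mp (show t*(21*a1^20) = 0 by linear_combination e1)).resolve_left ht
        exact pow_zero_of 20 (by norm_num) (by linear_combination h/21)
      · have h := (mul_eq_zero.mp (show t*(21*a2^20) = 0 by linear_combination e2)).resolve_left ht
        exact pow_zero_of 20 (by norm_num) (by linear_combination h/21)
      · have h := (mul_eq_zero.mp (show t*(-(21*a3^20)) = 0 by linear_combination e3)).resolve_left ht
        exact pow_zero_of 20 (by norm_num) (by linear_combination -h/21)
    by_cases hz2 : a2 = 0
    · subst hz2
      have z3 : a3 = 0 := by
        have h := (mul_eq_zero.mp (show s*(a3^8) = 0 by linear_combination e2)).resolve_left hs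
        exact pow_zero_of 8 (by norm_num) h
      subst z3
      have hz0 : a0 ≠ 0 := by
        intro h0; apply hnz; subst h0
        exact ⟨rfl, pow_zero_of 9 (by norm_num) (by linear_combination -h1), rfl, rfl⟩
      have hz1 : a1 ≠ 0 := by
        intro h0; apply hnz; subst h0
        exact ⟨pow_zero_of 9 (by norm_num) (by linear_combination h1), rfl, rfl, rfl⟩
      have hA : 9*s + 21*t*a0^12 = 0 :=
        (mul_eq_zero.mp (show a0^8*(9*s + 21*t*a0^12) = 0 by linear_combination e0)).resolve_left
          (pow_ne_zero 8 hz0)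
      have hB : -(9*s) + 21*t*a1^12 = 0 :=
        (mul_eq_zero.mp (show a1^8*(-(9*s) + 21*t*a1^12) = 0 by linear_combination e1)).resolve_left
          (pow_ne_zero 8 hz1)
      have hH : a0^12 + a1^12 = 0 :=
        (mul_eq_zero.mp (show (21*t)*(a0^12 + a1^12) = 0 by linear_combination hA + hB)).resolve_left
          (mul_ne_zero (by norm_num) ht)
      exact hz1 (pow_zero_of 36 (by norm_num) (show a1^36 = 0 by
        linear_combination ((a1^24 - a1^12*a0^12 + a0^24)*hH
          - (a0^27 + a0^18*a1^9 + a0^9*a1^18 + a1^27)*h1)/2))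
    · by_cases hz3 : a3 = 0
      · subst hz3
        exact hz2 (pow_zero_of 20 (by norm_num) (by
          have h := (mul_eq_zero.mp (show t*(21*a2^20) = 0 by linear_combination e2)).resolve_left ht
          linear_combination h/21))
      · have hE : a2^28 + 8*a2^21*a3^7 + 8*a2^7*a3^21 + a3^28 = 0 :=
          (mul_eq_zero.mp (show s*(a2^28 + 8*a2^21*a3^7 + 8*a2^7*a3^21 + a3^28) = 0 by
            linear_combination a3^20*e2 + a2^20*e3)).resolve_left hs
        by_cases hz1 : a1 = 0
        · subst hz1
          by_cases hz0 : a0 = 0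
          · subst hz0
            have huv : a2^7 + a3^7 = 0 :=
              (mul_eq_zero.mp (show (a2*a3)*(a2^7 + a3^7) = 0 by linear_combination h1)).resolve_left
                (mul_ne_zero hz2 hz3)
            exact hz2 (pow_zero_of 28 (by norm_num) (show a2^28 = 0 by
              linear_combination ((a3^21 + 7*a3^14*a2^7 - 7*a3^7*a2^14 + 15*a2^21)*huv - hE)/14))
          · have hA : 9*s + 21*t*a0^12 = 0 :=
              (mul_eq_zero.mp (show a0^8*(9*s + 21*t*a0^12) = 0 by
                linear_combination e0)).resolve_left (pow_ne_zero 8 hz0)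
            have hF : a0^12*(8*a2^7*a3 + a3^8) - 9*a2^20 = 0 :=
              (mul_eq_zero.mp (show s*(a0^12*(8*a2^7*a3 + a3^8) - 9*a2^20) = 0 by
                linear_combination a0^12*e2 - a2^20*hA)).resolve_left hs
            have hK2c : a3^7*(a2^7+a3^7)^4*(8*a2^7+a3^7)^3 = 729*a2^56 := by
              have h := (mul_eq_zero.mp (show
                  a2^4*(a3^7*(a2^7+a3^7)^4*(8*a2^7+a3^7)^3 - 729*a2^56) = 0 by
                linear_combination
                  ((a2^8*a3 + a3^8*a2)^3 - (a2^8*a3 + a3^8*a2)^2*a0^9 + (a2^8*a3 + a3^8*a2)*a0^18 - a0^27)*(a3^3*(8*a2^7+a3^7)^3)*h1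
                  + ((a0^12*(8*a2^7*a3 + a3^8))^2 + (a0^12*(8*a2^7*a3 + a3^8))*(9*a2^20)
                      + (9*a2^20)^2)*hF)).resolve_left (pow_ne_zero 4 hz2)
              linear_combination h
            exact hz2 (pow_zero_of 77 (by norm_num) (show a2^77 = 0 by
              linear_combination ((16014942108*a2^49 + 27339432724*a2^42*a3^7 + 59261021834*a2^35*a3^14 + 60958642556*a2^28*a3^21 + 29215492763*a2^21*a3^28 + 6291211916*a2^14*a3^35 + 611838518*a2^7*a3^42 + 22069468*a3^49) * hE + ((-196729847)*a2^21 + 75079956*a2^14*a3^7 + (-170449158)*a2^7*a3^14 + (-22069468)*a3^21) * hK2c)/159431000571))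
        · have hB : -(9*s) + 21*t*a1^12 = 0 :=
            (mul_eq_zero.mp (show a1^8*(-(9*s) + 21*t*a1^12) = 0 by
              linear_combination e1)).resolve_left (pow_ne_zero 8 hz1)
          by_cases hz0 : a0 = 0
          · subst hz0
            have hF3 : a1^12*(8*a2^7*a3 + a3^8) + 9*a2^20 = 0 :=
              (mul_eq_zero.mp (show s*(a1^12*(8*a2^7*a3 + a3^8) + 9*a2^20) = 0 by
                linear_combination a1^12*e2 - a2^20*hB)).resolve_left hs
            have hK3c : a3^7*(a2^7+a3^7)^4*(8*a2^7+a3^7)^3 = -(729*a2^56) := by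
              have h := (mul_eq_zero.mp (show
                  a2^4*(a3^7*(a2^7+a3^7)^4*(8*a2^7+a3^7)^3 + 729*a2^56) = 0 by
                linear_combination
                  ((a2^8*a3 + a3^8*a2)^3 + (a2^8*a3 + a3^8*a2)^2*a1^9 + (a2^8*a3 + a3^8*a2)*a1^18 + a1^27)*(a3^3*(8*a2^7+a3^7)^3)*h1
                  + ((a1^12*(8*a2^7*a3 + a3^8))^2 + (a1^12*(8*a2^7*a3 + a3^8))*(-(9*a2^20))
                      + (9*a2^20)^2)*hF3)).resolve_left (pow_ne_zero 4 hz2)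
              linear_combination h
            exact hz2 (pow_zero_of 77 (by norm_num) (show a2^77 = 0 by
              linear_combination (((-8233347492)*a2^49 + (-71414217908)*a2^42*a3^7 + (-114991026826)*a2^35*a3^14 + (-92562600796)*a2^28*a3^21 + (-38826659731)*a2^21*a3^28 + (-7859731732)*a2^14*a3^35 + (-740470090)*a2^7*a3^42 + (-26227268)*a3^49) * hE + (229992247*a2^21 + 26783220*a2^14*a3^7 + 215924730*a2^7*a3^14 + 26227268*a3^21) * hK3c)/159431000571))
          · have hA : 9*s + 21*t*a0^12 = 0 :=
              (mul_eq_zero.mp (show a0^8*(9*s + 21*t*a0^12) = 0 by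
                linear_combination e0)).resolve_left (pow_ne_zero 8 hz0)
            have hF : a0^12*(8*a2^7*a3 + a3^8) - 9*a2^20 = 0 :=
              (mul_eq_zero.mp (show s*(a0^12*(8*a2^7*a3 + a3^8) - 9*a2^20) = 0 by
                linear_combination a0^12*e2 - a2^20*hA)).resolve_left hs
            have hH : a0^12 + a1^12 = 0 :=
              (mul_eq_zero.mp (show (21*t)*(a0^12 + a1^12) = 0 by
                linear_combination hA + hB)).resolve_left (mul_ne_zero (by norm_num) ht)
            have h36 : a0^36 + a1^36 = 0 := by
              linear_combination (a0^24 - a0^12*a1^12 + a1^24)*hH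
            have hG : a0^12*(a2^8*a3 + a2*a3^8) = a2^21 - a3^21 := by
              linear_combination a0^12*h1 - h2 + a1^9*hH
            have ha19 : a1^9 ≠ 0 := pow_ne_zero _ hz1
            set w : ℂ := a0^9 / a1^9 with hwdef
            have hw9 : w * a1^9 = a0^9 := div_mul_cancel₀ _ ha19
            have hw : w^4 = -1 := by
              refine mul_right_cancel₀ (pow_ne_zero 36 hz1) ?_
              have h4 : (w*a1^9)^4 = (a0^9)^4 := by rw [hw9]
              show w^4 * a1^36 = -1 * a1^36
              linear_combination h4 + h36
            have hrs : (1-w)*a1^9 = a2^8*a3 + a3^8*a2 := by linear_combination -hw9 - h1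
            have k1 : (1-w)^4*a1^36 = (a2^8*a3 + a3^8*a2)^4 := by
              linear_combination (((1-w)*a1^9)^3 + ((1-w)*a1^9)^2*(a2^8*a3 + a3^8*a2)
                + ((1-w)*a1^9)*(a2^8*a3 + a3^8*a2)^2 + (a2^8*a3 + a3^8*a2)^3) * hrs
            have k2 : (a2^21 - a3^21)^3 + a1^36*(a2^8*a3 + a3^8*a2)^3 = 0 := by
              linear_combination (-((a2^21-a3^21)^2 + (a2^21-a3^21)*(a0^12*(a2^8*a3 + a3^8*a2))
                + (a0^12*(a2^8*a3 + a3^8*a2))^2))*hG + (a2^8*a3 + a3^8*a2)^3*h36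
            have hKey : a2^7*a3^7*(a2^7+a3^7)^7 + (1-w)^4*(a2^21-a3^21)^3 = 0 := by
              have hM : a1^36*(a2^7*a3^7*(a2^7+a3^7)^7 + (1-w)^4*(a2^21-a3^21)^3) = 0 := by
                linear_combination (a2^21-a3^21)^3*k1 + (a2^8*a3 + a3^8*a2)^4*k2
              exact (mul_eq_zero.mp hM).resolve_left (pow_ne_zero 36 hz1)
            exact hz2 (pow_zero_of 84 (by norm_num) (show a2^84 = 0 by
              linear_combination (((3741147929956274 + 2727558701757378*w + 4467194484559830*w^2 + 3217214135753262*w^3)*a2^56 + ((-2220400130743081) + 42431170017835291*w + 54951352874959827*w^2 + 31826724357534151*w^3)*a2^49*a3^7 + (45259545351742540 + 147986628971088932*w + 191495905433953980*w^2 + 108863776261213694*w^3)*a2^42*a3^14 + (52444655276199163 + 271517608634016967*w + 348260336585327253*w^2 + 196233564748597999*w^3)*a2^35*a3^21 + (63346345014547120 + 284403880508169158*w + 365192403759097116*w^2 + 205902921977723942*w^3)*a2^28*a3^28 + (13479719689859477 + 179454736440182223*w + 227683859261764149*w^2 + 127780758569101527*w^3)*a2^21*a3^35 + (11941334344174852 +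 60961491152491070*w + 77265029356766124*w^2 + 42773723563746404*w^3)*a2^14*a3^42 + ((-97796169152039) + 9422354785876791*w + 11399091618633939*w^2 + 5529906676706523*w^3)*a2^7*a3^49 + (7694853525205902 + (-771465386881106)*w + (-320226227268810)*w^2 + (-505960021544606)*w^3)*a3^56) * hE + (((-12645564564350385) + (-69928266102804585)*w + (-91442531055918177)*w^2 + (-52076717877418965)*w^3)*a2^21 + (1319340361488553 + 7585261699824513*w + 11430482079783537*w^2 + 5794656733711611*w^3)*a2^14*a3^7 + ((-13917830490212777) + (-69245564475053781)*w + (-88766715544051455)*w^2 + (-48978692020231839)*w^3)*a2^7*a3^14 + ((-1757764749328927) + (-8774019784791621)*w + (-11276774922472353)*w^2 + (-6217429217615433)*w^3)*a3^21) * hKey + ((73280814978965247 + 16618449143645667*w + (-116864340453757683)*w^2 + 52076717877418965*w^3)*a2^84 + ((-16382559106045279) + 3368726217039969*w + 11748144855062907*w^2 + (-5794656733711611)*w^3)*a2^77*a3^7 + (73621097773379027 + 8050854420238995*w + (-107148052536875901)*w^2 + 48978692020231839*w^3)*a2^70*a3^14 + ((-210389826662360912) + (-48883852030342194)*w + 337000079413283670*w^2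 + (-150012724414641462)*w^3)*a2^63*a3^21 + (49147677318135837 + (-10106178651119907)*w + (-35244434565188721)*w^2 + 17383970201134833*w^3)*a2^56*a3^28 + ((-220863293320137081) + (-24152563260716985)*w + 321444157610627703*w^2 + (-146936076060695517)*w^3)*a2^49*a3^35 + (191484590113291254 + 46940861229152580*w + (-309814195517304912)*w^2 + 137577865979410596*w^3)*a2^42*a3^42 + ((-49147677318135837) + 10106178651119907*w + 35244434565188721*w^2 + (-17383970201134833)*w^3)*a2^35*a3^49 + (220863293320137081 + 24152563260716985*w + (-321444157610627703)*w^2 + 146936076060695517*w^3)*a2^28*a3^56 + ((-44922960155360760) + (-13703962941861246)*w + 76085514609789546*w^2 + (-33424430224572666)*w^3)*a2^21*a3^63 + (16382559106045279 + (-3368726217039969)*w + (-11748144855062907)*w^2 + 5794656733711611*w^3)*a2^14*a3^70 + ((-73621097773379027) + (-8050854420238995)*w + 107148052536875901*w^2 + (-48978692020231839)*w^3)*a2^7*a3^77 + ((-9452618274534829) + (-971495400594807)*w + 13592941947989379*w^2 + (-6217429217615433)*w^3)*a3^84) * hw)/64376398344571136))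


/-- The surfaces `{G1 = 0}` and `{G2 = 0}` intersect transversally in `ℙ³_ℂ`: at every
nonzero common zero `a ∈ ℂ⁴` of `G1` and `G2`, the gradient vectors of `G1` and `G2`
are linearly independent over `ℂ`. -/
theorem stmt_13 (a : Fin 4 → ℂ) (ha : a ≠ 0)
    (h1 : eval a G1 = 0) (h2 : eval a G2 = 0) :
    LinearIndependent ℂ
      ![fun i : Fin 4 => eval a (pderiv i G1), fun i : Fin 4 => eval a (pderiv i G2)] := by
  rw [LinearIndependent.pair_iff]
  intro s t hst
  simp only [G1, G2, eval_add, eval_sub, eval_pow, eval_mul, eval_X] at h1 h2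
  have e0 : s * (9 * a 0 ^ 8) + t * (21 * a 0 ^ 20) = 0 := by
    have h := congrFun hst 0
    simp only [Pi.add_apply, Pi.smul_apply, smul_eq_mul, Pi.zero_apply] at h
    simp [G1, G2, pderiv_X] at h
    linear_combination h
  have e1 : s * (-(9 * a 1 ^ 8)) + t * (21 * a 1 ^ 20) = 0 := by
    have h := congrFun hst 1
    simp only [Pi.add_apply, Pi.smul_apply, smul_eq_mul, Pi.zero_apply] at h
    simp [G1, G2, pderiv_X] at h
    linear_combination h
  have e2 : s * (8 * a 2 ^ 7 * a 3 + a 3 ^ 8) + t * (21 * a 2 ^ 20) = 0 := by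
    have h := congrFun hst 2
    simp only [Pi.add_apply, Pi.smul_apply, smul_eq_mul, Pi.zero_apply] at h
    simp [G1, G2, pderiv_X] at h
    linear_combination h
  have e3 : s * (8 * a 3 ^ 7 * a 2 + a 2 ^ 8) + t * (-(21 * a 3 ^ 20)) = 0 := by
    have h := congrFun hst 3
    simp only [Pi.add_apply, Pi.smul_apply, smul_eq_mul, Pi.zero_apply] at h
    simp [G1, G2, pderiv_X] at h
    linear_combination h
  refine key (a 0) (a 1) (a 2) (a 3) s t h1 h2 e0 e1 e2 e3 ?_
  rintro ⟨q0, q1, q2, q3⟩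
  apply ha
  funext i
  fin_cases i <;> simpa using (by assumption : _)
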